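/- Let f : [a,b] → L(E,B,P) be Kurzweil–Henstock integrable in probability on [a,b], and suppose there exists A ∈ L¹(E,B,P) with A(ω) ≥ 0 for a.e. ω ∈ E such that P({ω ∈ E : |f(t, ω)| ≤ A(ω)}) = 1 for all t ∈ [a,b]. Then the function φ(t) = ∫_E f(t, ω) dP(ω), t ∈ [a,b], is Kurzweil–Henstock integrable on [a,b] and (KH)∫_a^b [∫_E f(t, ω) dP(ω)] dt = ∫_E [(KH)∫_a^b f(t, ω) dt] dP(ω). -/

import Mathlib

/-!
The Riemann sums `S` of a division of `[a, b]` are dominated by `(b - a) A`, hence so is their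
limit in probability `I`. For a `δ`-fine division, `∫ |S - I|` is then small: on the event
`{ε ≤ |S - I|}`, of small probability, by absolute continuity of the integral of `2 (b - a) A`,
and below `ε` off it. Since `∫ S` is the Riemann sum of `t ↦ ∫ f t dP`, the gauge `δ` that
witnesses integrability in probability also witnesses the Kurzweil–Henstock integrability of
`t ↦ ∫ f t dP`.
-/

open MeasureTheory

/-- `x 0 < x 1 < ... < x n` is a division of `[a, b]`. -/
def IsDivision (a b : ℝ) (n : ℕ) (x : ℕ → ℝ) : Prop :=
  0 < n ∧ x 0 = a ∧ x n = b ∧ ∀ i < n, x i < x (i + 1)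

/-- The tags `ξ i` belong to the corresponding subintervals `[x i, x (i+1)]`. -/
def ValidTags (n : ℕ) (x ξ : ℕ → ℝ) : Prop :=
  ∀ i < n, ξ i ∈ Set.Icc (x i) (x (i + 1))

/-- Riemann sum `S(f; d, ξ)(ω) = ∑ f(ξ i, ω) (x (i+1) - x i)` of a random function. -/
def randomRiemannSum {Ω : Type*} (f : ℝ → Ω → ℝ) (n : ℕ) (x ξ : ℕ → ℝ) (ω : Ω) : ℝ :=
  ∑ i ∈ Finset.range n, f (ξ i) ω * (x (i + 1) - x i)

/-- Riemann sum of a real function. -/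
def riemannSum (φ : ℝ → ℝ) (n : ℕ) (x ξ : ℕ → ℝ) : ℝ :=
  ∑ i ∈ Finset.range n, φ (ξ i) * (x (i + 1) - x i)

/-- `φ : [a, b] → ℝ` is Kurzweil–Henstock integrable on `[a, b]` with integral `I`:
for all `ε > 0` there is `δ : [a,b] → ℝ₊` such that every division with tags
`ξ i ∈ [x i, x (i+1)]` and `x (i+1) - x i < δ (ξ i)` has Riemann sum within `ε` of `I`. -/
def IsKHIntegral (a b : ℝ) (φ : ℝ → ℝ) (I : ℝ) : Prop :=
  ∀ ε > (0 : ℝ), ∃ δ : ℝ → ℝ, (∀ t ∈ Set.Icc a b, 0 < δ t) ∧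
    ∀ n x ξ, IsDivision a b n x → ValidTags n x ξ →
      (∀ i < n, x (i + 1) - x i < δ (ξ i)) →
      |I - riemannSum φ n x ξ| < ε

/-- `f` is Kurzweil–Henstock integrable in probability on `[a, b]` with integral `I`:
for all `ε, η > 0` there is `δ : [a,b] → ℝ₊` such that for any division with tags
`ξ i ∈ [x i, x (i+1)]` and `x (i+1) - x i < δ (ξ i)`, the Riemann sum is within `ε`
of `I` outside a set of probability less than `η`. -/
def IsKHIntegralInProb {Ω : Type*} [MeasurableSpace Ω] (P : Measure Ω)
    (a b : ℝ) (f : ℝ → Ω → ℝ) (I : Ω → ℝ) : Prop :=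
  ∀ ε > (0 : ℝ), ∀ η > (0 : ℝ), ∃ δ : ℝ → ℝ, (∀ t ∈ Set.Icc a b, 0 < δ t) ∧
    ∀ n x ξ, IsDivision a b n x → ValidTags n x ξ →
      (∀ i < n, x (i + 1) - x i < δ (ξ i)) →
      P {ω | ε ≤ |randomRiemannSum f n x ξ ω - I ω|} < ENNReal.ofReal η

open Set

namespace IsDivision

variable {a b : ℝ} {n : ℕ} {x : ℕ → ℝ}

lemma le_of_le (hd : IsDivision a b n x) {i j : ℕ} (hij : i ≤ j) (hjn : j ≤ n) : x i ≤ x j := by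
  induction j, hij using Nat.le_induction with
  | base => exact le_rfl
  | succ j _ ih => exact (ih (by omega)).trans (hd.2.2.2 j (by omega)).le

lemma mem_Icc (hd : IsDivision a b n x) {i : ℕ} (hi : i ≤ n) : x i ∈ Icc a b :=
  ⟨hd.2.1 ▸ hd.le_of_le i.zero_le hi, hd.2.2.1 ▸ hd.le_of_le hi le_rfl⟩

lemma tag_mem_Icc (hd : IsDivision a b n x) {ξ : ℕ → ℝ} (ht : ValidTags n x ξ) {i : ℕ}
    (hi : i < n) : ξ i ∈ Icc a b :=
  ⟨(hd.mem_Icc hi.le).1.trans (ht i hi).1, (ht i hi).2.trans (hd.mem_Icc hi).2⟩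

lemma sum_sub (hd : IsDivision a b n x) : ∑ i ∈ Finset.range n, (x (i + 1) - x i) = b - a := by
  rw [Finset.sum_range_sub x n, hd.2.1, hd.2.2.1]

end IsDivision

def HasFineDivision (δ : ℝ → ℝ) (a c : ℝ) : Prop :=
  ∃ n x ξ, IsDivision a c n x ∧ ValidTags n x ξ ∧ ∀ i < n, x (i + 1) - x i < δ (ξ i)

namespace HasFineDivision

variable {δ : ℝ → ℝ} {a c s : ℝ}

lemma of_sub_lt (hac : a < c) (hδ : c - a < δ a) : HasFineDivision δ a c := by
  refine ⟨1, fun i => a + i * (c - a), fun _ => a, ⟨one_pos, by simp, by simp, ?_⟩, ?_, ?_⟩ <;>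
    intro i hi <;> obtain rfl : i = 0 := by omega
  · simpa using hac
  · simpa using hac.le
  · simpa using hδ

lemma extend (hc : HasFineDivision δ a c) (hcs : c < s) {τ : ℝ} (hτ : τ ∈ Icc c s)
    (hδ : s - c < δ τ) : HasFineDivision δ a s := by
  obtain ⟨n, x, ξ, ⟨-, hx0, hxn, hmono⟩, htags, hfine⟩ := hc
  refine ⟨n + 1, fun i => if i ≤ n then x i else s, fun i => if i < n then ξ i else τ,
    ⟨n.succ_pos, by simp [hx0], by simp, fun i hi => ?_⟩, fun i hi => ?_, fun i hi => ?_⟩ <;>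
  rcases Nat.lt_succ_iff_lt_or_eq.mp hi with hi | rfl
  · simpa [hi.le, Nat.succ_le_of_lt hi] using hmono i hi
  · simpa [hxn] using hcs
  · simpa [hi, hi.le, Nat.succ_le_of_lt hi] using htags i hi
  · simpa [hxn] using hτ
  · simpa [hi, hi.le, Nat.succ_le_of_lt hi] using hfine i hi
  · simpa [hxn] using hδ

end HasFineDivision

/-- Cousin's lemma. The supremum `s` of the endpoints `c ≤ b` of `δ`-fine divisions of `[a, c]`
is itself one (extend a division of some `[a, c]` with `s - δ s < c` by `[c, s]` tagged at `s`),
and `s = b`, since otherwise such a division extends beyond `s`. -/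
theorem exists_fine_division {a b : ℝ} (hab : a < b) {δ : ℝ → ℝ}
    (hδ : ∀ t ∈ Icc a b, 0 < δ t) : HasFineDivision δ a b := by
  have hδa := hδ a ⟨le_rfl, hab.le⟩
  set S := {c | c ≤ b ∧ HasFineDivision δ a c}
  have hc₀ : a < min b (a + δ a / 2) := lt_min hab (by linarith)
  have hc₀S : min b (a + δ a / 2) ∈ S :=
    ⟨min_le_left _ _, .of_sub_lt hc₀ (by linarith [min_le_right b (a + δ a / 2)])⟩
  have hbdd : BddAbove S := ⟨b, fun c hc => hc.1⟩
  set s := sSup S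
  have hsa : a < s := hc₀.trans_le (le_csSup hbdd hc₀S)
  have hsb : s ≤ b := csSup_le ⟨_, hc₀S⟩ fun c hc => hc.1
  have hδs := hδ s ⟨hsa.le, hsb⟩
  have hs : HasFineDivision δ a s := by
    obtain ⟨c, hcS, hc⟩ := exists_lt_of_lt_csSup ⟨_, hc₀S⟩ (sub_lt_self s hδs)
    rcases (le_csSup hbdd hcS).eq_or_lt with hcs | hcs
    · exact (show c = s from hcs) ▸ hcS.2
    · exact hcS.2.extend hcs ⟨hcs.le, le_rfl⟩ (by linarith)
  rcases hsb.eq_or_lt with hsb | hsb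
  · exact hsb ▸ hs
  · have hs' : min b (s + δ s / 2) ∈ S := ⟨min_le_left _ _, hs.extend (lt_min hsb (by linarith))
      ⟨le_rfl, le_min hsb.le (by linarith)⟩ (by linarith [min_le_right b (s + δ s / 2)])⟩
    linarith [le_csSup hbdd hs', lt_min hsb (by linarith : s < s + δ s / 2)]

section Probability

variable {Ω : Type*} [MeasurableSpace Ω] {P : Measure Ω}

lemma ae_abs_le_of_measure_eq_one [IsProbabilityMeasure P] {g A : Ω → ℝ}
    (hg : AEStronglyMeasurable g P) (hA : AEStronglyMeasurable A P)
    (h : P {ω | |g ω| ≤ A ω} = 1) : ∀ᵐ ω ∂P, |g ω| ≤ A ω :=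
  (ae_iff_measure_eq (hg.norm.nullMeasurableSet_le hA)).2
    (by simpa only [Real.norm_eq_abs, measure_univ] using h)

lemma integrable_of_ae_abs_le {g C : Ω → ℝ} (hC : Integrable C P)
    (hg : AEStronglyMeasurable g P) (h : ∀ᵐ ω ∂P, |g ω| ≤ C ω) : Integrable g P :=
  hC.mono' hg (by simpa only [Real.norm_eq_abs] using h)

lemma ae_abs_le_of_forall_exists_measure_lt {B I : Ω → ℝ}
    (h : ∀ ε > (0 : ℝ), ∀ η > (0 : ℝ), ∃ g : Ω → ℝ, (∀ᵐ ω ∂P, |g ω| ≤ B ω) ∧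
      P {ω | ε ≤ |g ω - I ω|} < ENNReal.ofReal η) :
    ∀ᵐ ω ∂P, |I ω| ≤ B ω := by
  have hlt : ∀ ε > (0 : ℝ), ∀ᵐ ω ∂P, |I ω| < B ω + ε := by
    intro ε hε
    rw [ae_iff, ← nonpos_iff_eq_zero]
    refine ENNReal.le_of_forall_pos_le_add fun η hη _ => ?_
    obtain ⟨g, hgB, hgI⟩ := h ε hε η hη
    refine (measure_mono_ae ?_).trans (zero_add (η : ENNReal) ▸ ENNReal.ofReal_coe_nnreal ▸ hgI.le)
    filter_upwards [hgB] with ω hω hIω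
    have hBI : B ω + ε ≤ |I ω| := not_lt.1 hIω
    show ε ≤ |g ω - I ω|
    linarith [abs_sub_abs_le_abs_sub (I ω) (g ω), abs_sub_comm (I ω) (g ω)]
  have hall := ae_all_iff.2 fun k : ℕ => hlt (1 / (k + 1)) Nat.one_div_pos_of_nat
  filter_upwards [hall] with ω hω
  refine le_of_forall_pos_lt_add fun ε hε => ?_
  obtain ⟨k, hk⟩ := exists_nat_one_div_lt hε
  linarith [hω k]

lemma exists_pos_forall_integral_abs_lt [IsFiniteMeasure P] {C : Ω → ℝ} (hC : Integrable C P)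
    {ε : ℝ} (hε : 0 < ε) :
    ∃ η > (0 : ℝ), ∀ g : Ω → ℝ, Measurable g → (∀ᵐ ω ∂P, |g ω| ≤ C ω) →
      P {ω | ε ≤ |g ω|} < ENNReal.ofReal η → ∫ ω, |g ω| ∂P < P.real univ * ε + ε := by
  obtain ⟨η, hη0, hη⟩ :=
    exists_pos_setLIntegral_lt_of_measure_lt hC.2.ne (ENNReal.ofReal_pos.2 hε).ne'
  have hη1 : min η 1 ≠ ⊤ := (min_le_right η 1).trans_lt ENNReal.one_lt_top |>.ne
  refine ⟨(min η 1).toReal, ENNReal.toReal_pos (lt_min hη0 one_pos).ne' hη1,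
    fun g hg hgC hG => ?_⟩
  rw [ENNReal.ofReal_toReal hη1] at hG
  set G := {ω | ε ≤ |g ω|}
  have hGm : MeasurableSet G := measurableSet_le measurable_const hg.abs
  have hCG : ∫ ω in G, C ω ∂P < ε :=
    calc ∫ ω in G, C ω ∂P ≤ ∫ ω in G, ‖C ω‖ ∂P := integral_mono hC.integrableOn
          hC.integrableOn.norm fun ω => Real.le_norm_self (C ω)
      _ = (∫⁻ ω in G, ‖C ω‖ₑ ∂P).toReal := integral_norm_eq_lintegral_enorm hC.1.restrict
      _ < ε := ENNReal.toReal_lt_of_lt_ofReal (hη G (hG.trans_le (min_le_left _ _)))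
  have hpt : ∀ᵐ ω ∂P, |g ω| ≤ ε + G.indicator C ω := by
    filter_upwards [hgC] with ω hω
    by_cases hωG : ω ∈ G
    · rw [indicator_of_mem hωG]; linarith
    · rw [indicator_of_notMem hωG]; exact (not_le.1 hωG).le.trans (by simp)
  calc ∫ ω, |g ω| ∂P ≤ ∫ ω, ε + G.indicator C ω ∂P :=
        integral_mono_ae (integrable_of_ae_abs_le hC hg.aestronglyMeasurable hgC).abs
          ((integrable_const ε).add (hC.indicator hGm)) hpt
    _ = P.real univ * ε + ∫ ω in G, C ω ∂P := by
        rw [integral_add (integrable_const ε) (hC.indicator hGm), integral_const,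
          integral_indicator hGm, smul_eq_mul]
    _ < P.real univ * ε + ε := by gcongr

variable {f : ℝ → Ω → ℝ} {n : ℕ} {x ξ : ℕ → ℝ}

lemma measurable_randomRiemannSum (hf : ∀ i < n, Measurable (f (ξ i))) :
    Measurable (randomRiemannSum f n x ξ) :=
  Finset.measurable_sum _ fun i hi => (hf i (Finset.mem_range.1 hi)).mul_const _

lemma integral_randomRiemannSum (hf : ∀ i < n, Integrable (f (ξ i)) P) :
    ∫ ω, randomRiemannSum f n x ξ ω ∂P = riemannSum (fun t => ∫ ω, f t ω ∂P) n x ξ := by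
  unfold randomRiemannSum riemannSum
  rw [integral_finsetSum _ fun i hi => (hf i (Finset.mem_range.1 hi)).mul_const _]
  exact Finset.sum_congr rfl fun i _ => integral_mul_const _ _

lemma ae_abs_randomRiemannSum_le {a b : ℝ} {A : Ω → ℝ}
    (hfA : ∀ t ∈ Icc a b, ∀ᵐ ω ∂P, |f t ω| ≤ A ω) (hd : IsDivision a b n x)
    (ht : ValidTags n x ξ) : ∀ᵐ ω ∂P, |randomRiemannSum f n x ξ ω| ≤ (b - a) * A ω := by
  have hall : ∀ᵐ ω ∂P, ∀ i ∈ Finset.range n, |f (ξ i) ω| ≤ A ω :=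
    (Filter.eventually_all_finset _).2 fun i hi =>
      hfA _ (hd.tag_mem_Icc ht (Finset.mem_range.1 hi))
  filter_upwards [hall] with ω hω
  calc |randomRiemannSum f n x ξ ω|
      ≤ ∑ i ∈ Finset.range n, |f (ξ i) ω| * (x (i + 1) - x i) := by
        refine (Finset.abs_sum_le_sum_abs _ _).trans_eq (Finset.sum_congr rfl fun i hi => ?_)
        rw [abs_mul, abs_of_pos (sub_pos.2 (hd.2.2.2 i (Finset.mem_range.1 hi)))]
    _ ≤ ∑ i ∈ Finset.range n, A ω * (x (i + 1) - x i) := by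
        refine Finset.sum_le_sum fun i hi => ?_
        exact mul_le_mul_of_nonneg_right (hω i hi)
          (sub_nonneg.2 (hd.2.2.2 i (Finset.mem_range.1 hi)).le)
    _ = (b - a) * A ω := by rw [← Finset.mul_sum, hd.sum_sub, mul_comm]

end Probability

theorem kh_integral_in_prob_fubini_general {Ω : Type*} [MeasurableSpace Ω]
    (P : Measure Ω) [IsProbabilityMeasure P] (a b : ℝ) (hab : a < b)
    (f : ℝ → Ω → ℝ) (hf : ∀ t ∈ Set.Icc a b, Measurable (f t))
    (I : Ω → ℝ) (hImeas : Measurable I)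
    (hI : IsKHIntegralInProb P a b f I)
    (A : Ω → ℝ) (hA : Integrable A P)
    (hdom : ∀ t ∈ Set.Icc a b, P {ω | |f t ω| ≤ A ω} = 1) :
    IsKHIntegral a b (fun t => ∫ ω, f t ω ∂P) (∫ ω, I ω ∂P) := by
  have hfA : ∀ t ∈ Icc a b, ∀ᵐ ω ∂P, |f t ω| ≤ A ω := fun t ht =>
    ae_abs_le_of_measure_eq_one (hf t ht).aestronglyMeasurable hA.1 (hdom t ht)
  have hft : ∀ t ∈ Icc a b, Integrable (f t) P := fun t ht =>
    integrable_of_ae_abs_le hA (hf t ht).aestronglyMeasurable (hfA t ht)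
  have hIA : ∀ᵐ ω ∂P, |I ω| ≤ (b - a) * A ω := by
    refine ae_abs_le_of_forall_exists_measure_lt fun ε hε η hη => ?_
    obtain ⟨δ, hδ0, hδ⟩ := hI ε hε η hη
    obtain ⟨n, x, ξ, hd, ht, hfine⟩ := exists_fine_division hab hδ0
    exact ⟨_, ae_abs_randomRiemannSum_le hfA hd ht, hδ n x ξ hd ht hfine⟩
  have hIint := integrable_of_ae_abs_le (hA.const_mul (b - a)) hImeas.aestronglyMeasurable hIA
  intro ε hε
  obtain ⟨η, hη, hη_int⟩ :=
    exists_pos_forall_integral_abs_lt ((hA.const_mul (b - a)).const_mul 2) (half_pos hε)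
  obtain ⟨δ, hδ0, hδ⟩ := hI (ε / 2) (half_pos hε) η hη
  refine ⟨δ, hδ0, fun n x ξ hd ht hfine => ?_⟩
  have hSA := ae_abs_randomRiemannSum_le hfA hd ht
  have hS := measurable_randomRiemannSum (x := x) fun i hi => hf _ (hd.tag_mem_Icc ht hi)
  have hSint := integrable_of_ae_abs_le (hA.const_mul (b - a)) hS.aestronglyMeasurable hSA
  have hSI : ∀ᵐ ω ∂P, |randomRiemannSum f n x ξ ω - I ω| ≤ 2 * ((b - a) * A ω) := by
    filter_upwards [hSA, hIA] with ω hSω hIω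
    linarith [abs_sub (randomRiemannSum f n x ξ ω) (I ω)]
  rw [← integral_randomRiemannSum fun i hi => hft _ (hd.tag_mem_Icc ht hi), abs_sub_comm, ← integral_sub hSint hIint]
  calc |∫ ω, randomRiemannSum f n x ξ ω - I ω ∂P|
      ≤ ∫ ω, |randomRiemannSum f n x ξ ω - I ω| ∂P := abs_integral_le_integral_abs
    _ < P.real univ * (ε / 2) + ε / 2 :=
        hη_int _ (hS.sub hImeas) hSI (hδ n x ξ hd ht hfine)
    _ = ε := by rw [probReal_univ]; ring

/-- **Theorem 3.3 (Fubini type).** Let `f : [a, b] → L(E, B, P)` be Kurzweil–Henstock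
integrable in probability on `[a, b]` with integral `I ∈ L(E, B, P)`, and suppose there
is `A ∈ L¹(E, B, P)` with `A ≥ 0` a.e. and `P {ω | |f t ω| ≤ A ω} = 1` for every
`t ∈ [a, b]`. Then `φ (t) = ∫ f (t, ω) dP(ω)` is Kurzweil–Henstock integrable on
`[a, b]` and `(KH)∫_a^b [∫ f (t, ω) dP(ω)] dt = ∫ [(KH)∫_a^b f (t, ω) dt] dP(ω)`. -/
theorem kh_integral_in_prob_fubini {Ω : Type*} [MeasurableSpace Ω]
    (P : Measure Ω) [IsProbabilityMeasure P] (a b : ℝ) (hab : a < b)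
    (f : ℝ → Ω → ℝ) (hf : ∀ t ∈ Set.Icc a b, Measurable (f t))
    (I : Ω → ℝ) (hImeas : Measurable I)
    (hI : IsKHIntegralInProb P a b f I)
    (A : Ω → ℝ) (hA : Integrable A P) (hA0 : ∀ᵐ ω ∂P, 0 ≤ A ω)
    (hdom : ∀ t ∈ Set.Icc a b, P {ω | |f t ω| ≤ A ω} = 1) :
    IsKHIntegral a b (fun t => ∫ ω, f t ω ∂P) (∫ ω, I ω ∂P) :=
  kh_integral_in_prob_fubini_general P a b hab f hf I hImeas hI A hA hdom
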